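/- Along any C¹ trajectory of the sliding-augmented system ẋ = P(x)f(x,t) - Σⱼ cⱼ hⱼ(x)∇hⱼ(x) (with cⱼ > 0), the function s(x) = ½ Σᵢ cᵢ hᵢ(x)² satisfies ds/dt = -‖Σᵢ cᵢ hᵢ(x)∇hᵢ(x)‖² ≤ 0. -/

import Mathlib

open scoped RealInnerProductSpace

/-! By the chain rule, `ds/dt = ⟪v, ẋ⟫` with `v = Σᵢ cᵢ hᵢ(x) ∇hᵢ(x)`. The projected part of
`ẋ` is orthogonal to every `∇hᵢ(x)`, hence to `v`, so `⟪v, ẋ⟫ = -⟪v, v⟫ = -‖v‖²`. -/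

section

variable {F : Type*} [NormedAddCommGroup F] [InnerProductSpace ℝ F]

theorem inner_sum_smul_smul_eq_zero {ι : Type*} (s : Finset ι) (a b : ι → ℝ) {g : ι → F} {p : F}
    (hp : ∀ i ∈ s, ⟪g i, p⟫ = 0) : ⟪∑ i ∈ s, a i • b i • g i, p⟫ = 0 := by
  rw [sum_inner]
  exact Finset.sum_eq_zero fun i hi => by simp only [real_inner_smul_left, hp i hi, mul_zero]

variable [CompleteSpace F]

theorem HasGradientAt.comp_hasDerivAt {f : F → ℝ} {g : F} {x : ℝ → F} {x' : F} {t : ℝ}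
    (hf : HasGradientAt f g (x t)) (hx : HasDerivAt x x' t) :
    HasDerivAt (fun τ => f (x τ)) ⟪g, x'⟫ t := by
  have hcomp := hf.hasFDerivAt.comp_hasDerivAt t hx
  rw [InnerProductSpace.toDual_apply_apply] at hcomp
  exact hcomp

theorem HasGradientAt.hasDerivAt_half_sum_mul_sq {ι : Type*} [Fintype ι] {h : ι → F → ℝ}
    {g : ι → F} (c : ι → ℝ) {x : ℝ → F} {x' : F} {t : ℝ}
    (hh : ∀ i, HasGradientAt (h i) (g i) (x t)) (hx : HasDerivAt x x' t) :
    HasDerivAt (fun τ => (1 / 2 : ℝ) * ∑ i, c i * h i (x τ) ^ 2)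
      ⟪∑ i, c i • h i (x t) • g i, x'⟫ t := by
  have hsum := HasDerivAt.fun_sum (u := Finset.univ) fun i _ =>
    (((hh i).comp_hasDerivAt hx).fun_pow 2).const_mul (c i)
  refine (hsum.const_mul (1 / 2 : ℝ)).congr_deriv ?_
  rw [sum_inner, Finset.mul_sum]
  refine Finset.sum_congr rfl fun i _ => ?_
  rw [real_inner_smul_left, real_inner_smul_left]
  push_cast
  ring

end

theorem sliding_variable_decreases_general {n m : ℕ}
    (h : Fin m → EuclideanSpace ℝ (Fin n) → ℝ)
    (gh : Fin m → EuclideanSpace ℝ (Fin n) → EuclideanSpace ℝ (Fin n))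
    (hgrad : ∀ i p, HasGradientAt (h i) (gh i p) p)
    (c : Fin m → ℝ)
    (x : ℝ → EuclideanSpace ℝ (Fin n))
    (Pf : ℝ → EuclideanSpace ℝ (Fin n))
    (htan : ∀ t i, ⟪gh i (x t), Pf t⟫ = 0)
    (hx : ∀ t, HasDerivAt x (Pf t - ∑ j, c j • h j (x t) • gh j (x t)) t) :
    ∀ t : ℝ,
      HasDerivAt (fun τ => (1 / 2 : ℝ) * ∑ i, c i * (h i (x τ)) ^ 2)
        (-‖∑ i, c i • h i (x t) • gh i (x t)‖ ^ 2) t ∧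
      -‖∑ i, c i • h i (x t) • gh i (x t)‖ ^ 2 ≤ 0 := by
  intro t
  set v := ∑ i, c i • h i (x t) • gh i (x t)
  have hderiv := HasGradientAt.hasDerivAt_half_sum_mul_sq c (fun i => hgrad i (x t)) (hx t)
  have horth : ⟪v, Pf t⟫ = 0 :=
    inner_sum_smul_smul_eq_zero _ c (fun i => h i (x t)) fun i _ => htan t i
  refine ⟨?_, neg_nonpos.mpr (sq_nonneg _)⟩
  rwa [inner_sub_right, horth, real_inner_self_eq_norm_sq, zero_sub] at hderiv

/-- Along any C¹ trajectory of the sliding-augmented system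
`ẋ = P(x)f(x,t) - Σⱼ cⱼ hⱼ(x) ∇hⱼ(x)` (with `cⱼ > 0`, and `P(x)f ∈ ker ∇h(x)`,
i.e. the projected part is orthogonal to every `∇hᵢ(x)`), the sliding variable
`s = ½ Σᵢ cᵢ hᵢ(x)²` satisfies `ds/dt = -‖Σᵢ cᵢ hᵢ(x) ∇hᵢ(x)‖² ≤ 0`. -/
theorem sliding_variable_decreases {n m : ℕ}
    (h : Fin m → EuclideanSpace ℝ (Fin n) → ℝ)
    (gh : Fin m → EuclideanSpace ℝ (Fin n) → EuclideanSpace ℝ (Fin n))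
    (hgrad : ∀ i p, HasGradientAt (h i) (gh i p) p)
    (c : Fin m → ℝ) (hc : ∀ i, 0 < c i)
    (x : ℝ → EuclideanSpace ℝ (Fin n))
    (Pf : ℝ → EuclideanSpace ℝ (Fin n))
    (htan : ∀ t i, ⟪gh i (x t), Pf t⟫ = 0)
    (hx : ∀ t, HasDerivAt x (Pf t - ∑ j, c j • h j (x t) • gh j (x t)) t) :
    ∀ t : ℝ,
      HasDerivAt (fun τ => (1 / 2 : ℝ) * ∑ i, c i * (h i (x τ)) ^ 2)
        (-‖∑ i, c i • h i (x t) • gh i (x t)‖ ^ 2) t ∧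
      -‖∑ i, c i • h i (x t) • gh i (x t)‖ ^ 2 ≤ 0 :=
  sliding_variable_decreases_general h gh hgrad c x Pf htan hx
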